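/- For every complex N×N matrix B and all indices a, b : Fin n, one has Tr(γ_a * (4 • (B * γ_b * B) − 4 • (B * {γ_b, B}) − 2 • ∑_c {γ_b, B} * γ_c * {γ_c, B} + 2 • (γ_b * ∑_c {γ_c, B} * {γ_c, B}) + ∑_c γ_c * {γ_c, B} * {γ_b, B} + ∑_c γ_c * {γ_b, B} * {γ_c, B} − γ_b * ∑_c {γ_c, B} * {γ_c, B})) = 2 · Tr((δ_{ab} • B − γ_a * {γ_b, B}) * (∑_c {γ_c, B} * γ_c − 2 • B)). (This is the full simplification of the terms of the Einstein functional that are quadratic in the perturbation B.) -/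

import Mathlib

open Matrix BigOperators

/-- The anticommutator {X, Y} = X*Y + Y*X of two matrices. -/
noncomputable def acomm {N : ℕ} (X Y : Matrix (Fin N) (Fin N) ℂ) : Matrix (Fin N) (Fin N) ℂ :=
  X * Y + Y * X

/-!
Write `A c = {γ c, B}` and `S = ∑ c, A c * γ c`. Since `γ c` commutes with `A c`, the term
`∑ c, {γ b, B} * γ c * A c` is `{γ b, B} * S`, and `∑ c, Tr (A c * A c) = 2 Tr (B * S)`.
The remaining contracted terms are treated one index `c` at a time. For `c ≠ a`, `γ c`
anticommutes with `γ a` and squares to `1`, and moving it around the trace collapses the summand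
to `δ_ab Tr (A c * A c)`. For `c = a` there is the extra contribution
`4 Tr (γ a B γ b B) + 4 δ_ab Tr (B * B)`, which together with `4 Tr (γ a {γ b, B} B)` on the
right balances the terms `B γ b B` and `B {γ b, B}`.
-/

section Clifford

variable {ι : Type*} [DecidableEq ι] {N : ℕ}

def IsCliffordFamily (γ : ι → Matrix (Fin N) (Fin N) ℂ) : Prop :=
  ∀ a b, γ a * γ b + γ b * γ a
    = (2 * if a = b then (1:ℂ) else 0) • (1 : Matrix (Fin N) (Fin N) ℂ)

namespace IsCliffordFamily

variable {γ : ι → Matrix (Fin N) (Fin N) ℂ}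

theorem mul_self (hγ : IsCliffordFamily γ) (c : ι) : γ c * γ c = 1 := by
  have h := hγ c c
  rw [if_pos rfl, mul_one, ← two_smul ℂ] at h
  exact smul_right_injective _ two_ne_zero h

theorem mul_mul_self_cancel (hγ : IsCliffordFamily γ) (c : ι) (X : Matrix (Fin N) (Fin N) ℂ) :
    γ c * (γ c * X) = X := by
  rw [← mul_assoc, hγ.mul_self, one_mul]

theorem mul_mul_mul_add_mul_mul_mul (hγ : IsCliffordFamily γ) (a b : ι)
    (X Y : Matrix (Fin N) (Fin N) ℂ) :
    X * γ a * γ b * Y + X * γ b * γ a * Y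
      = (2 * if a = b then (1:ℂ) else 0) • (X * Y) := by
  have h := congrArg (X * · * Y) (hγ a b)
  simp only [mul_add, add_mul, mul_smul_comm, smul_mul_assoc, mul_one, mul_assoc] at h ⊢
  exact h

theorem trace_mul_mul_add_trace_mul_mul (hγ : IsCliffordFamily γ) (a b : ι)
    (X : Matrix (Fin N) (Fin N) ℂ) :
    (γ a * γ b * X).trace + (γ b * γ a * X).trace
      = (2 * if a = b then (1:ℂ) else 0) * X.trace := by
  rw [← trace_add, ← add_mul, hγ, smul_mul_assoc, one_mul, trace_smul, smul_eq_mul]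

theorem trace_gamma_mul_gamma (hγ : IsCliffordFamily γ) (a b : ι)
    (X : Matrix (Fin N) (Fin N) ℂ) :
    (γ a * X * γ b).trace
      = (2 * if a = b then (1:ℂ) else 0) * X.trace - (γ a * γ b * X).trace := by
  rw [← hγ.trace_mul_mul_add_trace_mul_mul a b X, trace_mul_comm, ← mul_assoc]
  ring

theorem commute_acomm (hγ : IsCliffordFamily γ) (c : ι) (B : Matrix (Fin N) (Fin N) ℂ) :
    Commute (γ c) (acomm (γ c) B) := by
  rw [Commute, SemiconjBy, acomm, mul_add, add_mul, ← mul_assoc, hγ.mul_self, mul_assoc,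
    mul_assoc, hγ.mul_self, one_mul, mul_one, add_comm]

theorem trace_mul_mul_of_commute (hγ : IsCliffordFamily γ) (a b : ι)
    {X : Matrix (Fin N) (Fin N) ℂ} (hX : Commute (γ a) X) :
    (γ a * γ b * X).trace = (if a = b then (1:ℂ) else 0) * X.trace := by
  have h := hγ.trace_mul_mul_add_trace_mul_mul a b X
  rw [mul_assoc (γ b), hX.eq, ← mul_assoc, trace_mul_comm (γ b * X), ← mul_assoc] at h
  linear_combination h / 2

theorem trace_acomm_mul_acomm (hγ : IsCliffordFamily γ) (a b : ι)
    (B : Matrix (Fin N) (Fin N) ℂ) :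
    (acomm (γ a) B * acomm (γ b) B).trace
      = 2 * (γ a * B * γ b * B).trace + (2 * if a = b then (1:ℂ) else 0) * (B * B).trace := by
  have h₁ := hγ.trace_gamma_mul_gamma a b (B * B)
  have h₂ := trace_mul_comm B (γ a * γ b * B)
  have h₃ := trace_mul_comm B (γ a * B * γ b)
  simp only [acomm, mul_add, add_mul, trace_add, mul_assoc] at h₁ h₂ h₃ ⊢
  linear_combination h₁ + h₂ + h₃

theorem trace_contraction_summand_self (hγ : IsCliffordFamily γ) (a b : ι)
    (B : Matrix (Fin N) (Fin N) ℂ) :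
    (γ a * γ b * acomm (γ a) B * acomm (γ a) B).trace
      + (γ a * γ a * acomm (γ a) B * acomm (γ b) B).trace
      + (γ a * γ a * acomm (γ b) B * acomm (γ a) B).trace
      = (if a = b then (1:ℂ) else 0) * (acomm (γ a) B * acomm (γ a) B).trace
        + 4 * (γ a * B * γ b * B).trace
        + 4 * (if a = b then (1:ℂ) else 0) * (B * B).trace := by
  have hcomm := hγ.commute_acomm a B
  rw [mul_assoc (γ a * γ b), hγ.trace_mul_mul_of_commute a b (hcomm.mul_right hcomm),
    hγ.mul_self, one_mul, one_mul, trace_mul_comm (acomm (γ b) B), hγ.trace_acomm_mul_acomm a b]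
  ring

theorem trace_contraction_summand_of_ne (hγ : IsCliffordFamily γ) {a c : ι} (hca : c ≠ a)
    (b : ι) (B : Matrix (Fin N) (Fin N) ℂ) :
    (γ a * γ b * acomm (γ c) B * acomm (γ c) B).trace
      + (γ a * γ c * acomm (γ c) B * acomm (γ b) B).trace
      + (γ a * γ c * acomm (γ b) B * acomm (γ c) B).trace
      = (if a = b then (1:ℂ) else 0) * (acomm (γ c) B * acomm (γ c) B).trace := by
  simp only [acomm, mul_add, add_mul, trace_add, mul_assoc, hγ.mul_mul_self_cancel]
  have h₁ := hγ.trace_gamma_mul_gamma a c (γ c * γ b * B * B)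
  have h₂ := hγ.trace_gamma_mul_gamma a c (γ c * B * γ b * B)
  have h₃ := hγ.trace_gamma_mul_gamma a c (γ b * B * γ c * B)
  have h₄ := hγ.trace_gamma_mul_gamma a c (γ b * γ c * B * B)
  have h₅ := congrArg trace (hγ.mul_mul_mul_add_mul_mul_mul c b (γ a * γ c) (B * B))
  have h₆ := hγ.trace_gamma_mul_gamma a b (B * B)
  have h₇ := hγ.trace_gamma_mul_gamma a b (γ c * B * γ c * B)
  have h₈ := congrArg trace (hγ.mul_mul_mul_add_mul_mul_mul c b (γ a * γ c * B) B)
  have h₉ := trace_mul_comm (γ c * B * B) (γ c)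
  have h₁₀ := trace_mul_comm B (γ c * B * γ c)
  simp only [if_neg hca.symm, mul_zero, zero_mul, zero_sub, trace_add, trace_smul, smul_eq_mul,
    mul_assoc, hγ.mul_mul_self_cancel] at h₁ h₂ h₃ h₄ h₅ h₆ h₇ h₈ h₉ h₁₀
  linear_combination h₁ + h₂ + h₃ + h₄ - h₅ + h₆ + h₇ + h₈
    - (if a = b then (1:ℂ) else 0) * (h₉ + h₁₀)

theorem trace_contraction [Fintype ι] (hγ : IsCliffordFamily γ) (a b : ι)
    (B : Matrix (Fin N) (Fin N) ℂ) :
    (γ a * (γ b * ∑ c, acomm (γ c) B * acomm (γ c) B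
        + ∑ c, γ c * acomm (γ c) B * acomm (γ b) B
        + ∑ c, γ c * acomm (γ b) B * acomm (γ c) B)).trace
      = (if a = b then (1:ℂ) else 0) * ∑ c, (acomm (γ c) B * acomm (γ c) B).trace
        + 4 * (γ a * B * γ b * B).trace
        + 4 * (if a = b then (1:ℂ) else 0) * (B * B).trace := by
  have h : ∀ c, (γ a * γ b * acomm (γ c) B * acomm (γ c) B).trace
      + (γ a * γ c * acomm (γ c) B * acomm (γ b) B).trace
      + (γ a * γ c * acomm (γ b) B * acomm (γ c) B).trace
      = (if a = b then (1:ℂ) else 0) * (acomm (γ c) B * acomm (γ c) B).trace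
        + if c = a then 4 * (γ a * B * γ b * B).trace
          + 4 * (if a = b then (1:ℂ) else 0) * (B * B).trace else 0 := by
    intro c
    by_cases hca : c = a
    · subst hca
      rw [if_pos rfl, hγ.trace_contraction_summand_self]
      ring
    · rw [if_neg hca, hγ.trace_contraction_summand_of_ne hca, add_zero]
  simp only [Finset.mul_sum, mul_add, trace_add, trace_sum, ← Finset.sum_add_distrib,
    ← mul_assoc]
  rw [Finset.sum_congr rfl fun c _ => h c, Finset.sum_add_distrib, Finset.sum_ite_eq',
    if_pos (Finset.mem_univ a), add_assoc]

theorem sum_mul_gamma_mul_acomm [Fintype ι] (hγ : IsCliffordFamily γ)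
    (X B : Matrix (Fin N) (Fin N) ℂ) :
    ∑ c, X * γ c * acomm (γ c) B = X * ∑ c, acomm (γ c) B * γ c := by
  rw [Finset.mul_sum]
  exact Finset.sum_congr rfl fun c _ => by rw [mul_assoc, (hγ.commute_acomm c B).eq]

theorem sum_trace_acomm_mul_self [Fintype ι] (hγ : IsCliffordFamily γ)
    (B : Matrix (Fin N) (Fin N) ℂ) :
    ∑ c, (acomm (γ c) B * acomm (γ c) B).trace
      = 2 * (B * ∑ c, acomm (γ c) B * γ c).trace := by
  rw [Finset.mul_sum, trace_sum, Finset.mul_sum]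
  refine Finset.sum_congr rfl fun c _ => ?_
  have h₁ : (acomm (γ c) B * (γ c * B)).trace = (B * (acomm (γ c) B * γ c)).trace := by
    rw [← mul_assoc, trace_mul_comm]
  have h₂ : (acomm (γ c) B * (B * γ c)).trace = (B * (acomm (γ c) B * γ c)).trace := by
    rw [← mul_assoc, trace_mul_comm, ← mul_assoc, (hγ.commute_acomm c B).eq, mul_assoc, h₁]
  rw [show acomm (γ c) B * acomm (γ c) B
      = acomm (γ c) B * (γ c * B) + acomm (γ c) B * (B * γ c) from mul_add _ _ _,
    trace_add, h₁, h₂]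
  ring

end IsCliffordFamily

end Clifford

theorem stmt_6_general (n N : ℕ)
    (γ : Fin n → Matrix (Fin N) (Fin N) ℂ)
    (hγ : ∀ a b : Fin n, γ a * γ b + γ b * γ a
      = (2 * if a = b then (1:ℂ) else 0) • (1 : Matrix (Fin N) (Fin N) ℂ))
    (B : Matrix (Fin N) (Fin N) ℂ) (a b : Fin n) :
    Matrix.trace (γ a * ((4:ℂ) • (B * γ b * B)
        - (4:ℂ) • (B * acomm (γ b) B)
        - (2:ℂ) • ∑ c : Fin n, acomm (γ b) B * γ c * acomm (γ c) B
        + (2:ℂ) • (γ b * ∑ c : Fin n, acomm (γ c) B * acomm (γ c) B)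
        + ∑ c : Fin n, γ c * acomm (γ c) B * acomm (γ b) B
        + ∑ c : Fin n, γ c * acomm (γ b) B * acomm (γ c) B
        - γ b * ∑ c : Fin n, acomm (γ c) B * acomm (γ c) B))
      = 2 * Matrix.trace (((if a = b then (1:ℂ) else 0) • B - γ a * acomm (γ b) B)
          * (∑ c : Fin n, acomm (γ c) B * γ c - (2:ℂ) • B)) := by
  have hC : IsCliffordFamily γ := hγ
  have hsplit : (γ a * (B * acomm (γ b) B)).trace + (γ a * (acomm (γ b) B * B)).trace
      = (acomm (γ a) B * acomm (γ b) B).trace := by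
    rw [show acomm (γ a) B = γ a * B + B * γ a from rfl, add_mul, trace_add,
      ← mul_assoc (γ a) (acomm (γ b) B), trace_mul_comm (γ a * acomm (γ b) B), mul_assoc,
      mul_assoc]
  have hab := hC.trace_acomm_mul_acomm a b B
  have hcontr := hC.trace_contraction a b B
  rw [hC.sum_trace_acomm_mul_self] at hcontr
  rw [hC.sum_mul_gamma_mul_acomm]
  simp only [mul_add, mul_sub, sub_mul, mul_smul_comm, smul_mul_assoc, trace_add, trace_sub,
    trace_smul, smul_eq_mul, mul_assoc] at hsplit hab hcontr ⊢
  linear_combination hcontr - 4 * (hsplit + hab)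

theorem stmt_6 (n N : ℕ) (hn : 0 < n) (hN : 0 < N)
    (γ : Fin n → Matrix (Fin N) (Fin N) ℂ)
    (hγ : ∀ a b : Fin n, γ a * γ b + γ b * γ a
      = (2 * if a = b then (1:ℂ) else 0) • (1 : Matrix (Fin N) (Fin N) ℂ))
    (B : Matrix (Fin N) (Fin N) ℂ) (a b : Fin n) :
    Matrix.trace (γ a * ((4:ℂ) • (B * γ b * B)
        - (4:ℂ) • (B * acomm (γ b) B)
        - (2:ℂ) • ∑ c : Fin n, acomm (γ b) B * γ c * acomm (γ c) B
        + (2:ℂ) • (γ b * ∑ c : Fin n, acomm (γ c) B * acomm (γ c) B)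
        + ∑ c : Fin n, γ c * acomm (γ c) B * acomm (γ b) B
        + ∑ c : Fin n, γ c * acomm (γ b) B * acomm (γ c) B
        - γ b * ∑ c : Fin n, acomm (γ c) B * acomm (γ c) B))
      = 2 * Matrix.trace (((if a = b then (1:ℂ) else 0) • B - γ a * acomm (γ b) B)
          * (∑ c : Fin n, acomm (γ c) B * γ c - (2:ℂ) • B)) :=
  stmt_6_general n N γ hγ B a b
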